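/- (Alternate Hadamard test) Let U = U_{2m} ⋯ U_1 be a product of 2m unitaries on C^{2^n} with U|ψ⟩ having any unit input |ψ⟩. For i = 1, ..., m define W_i = |0⟩⟨0| ⊗ U†_{2m+1−i} + |1⟩⟨1| ⊗ U_i on C^2 ⊗ C^{2^n}. Then applying (H ⊗ I) W_m ⋯ W_1 (H ⊗ I) to |0⟩|ψ⟩ and measuring the first qubit in the standard basis yields outcome 0 with probability (1 + Re⟨ψ|U|ψ⟩)/2. -/

import Mathlib

open Matrix Kronecker

noncomputable section

/-- The Hadamard gate. -/
def H2 : Matrix (Fin 2) (Fin 2) ℂ :=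
  (((Real.sqrt 2)⁻¹ : ℝ) : ℂ) • !![1, 1; 1, -1]

/-- The projector `|0⟩⟨0|` on one qubit. -/
def e00 : Matrix (Fin 2) (Fin 2) ℂ := Matrix.single 0 0 1

/-- The projector `|1⟩⟨1|` on one qubit. -/
def e11 : Matrix (Fin 2) (Fin 2) ℂ := Matrix.single 1 1 1

/-!
Let `A = U_m ⋯ U_1` and `C = U_{2m} ⋯ U_{m+1}`, so that `U = C A`. The gates `W_i` are block
diagonal with respect to the control qubit, hence `W_m ⋯ W_1 = |0⟩⟨0| ⊗ C† + |1⟩⟨1| ⊗ A`.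
Conjugating by `H ⊗ I` and projecting onto `|0⟩` leaves the amplitude `(C† + A) ψ / 2`; since
`C†` and `A` are unitary, its squared norm is `(2 + 2 Re⟨ψ|C A|ψ⟩) / 4`.
-/

theorem List.reverse_ofFn {β : Type*} {k : ℕ} (f : Fin k → β) :
    (List.ofFn f).reverse = List.ofFn (fun i => f i.rev) := by
  rw [List.ofFn_eq_map, ← List.map_reverse, List.finRange_reverse, List.map_map,
    ← List.ofFn_eq_map]
  rfl

theorem prod_reverse_ofFn_two_mul {M : Type*} [Monoid M] (m : ℕ) (U : Fin (2 * m) → M) :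
    (List.ofFn U).reverse.prod =
      (List.ofFn fun i : Fin m => U ⟨m + i, by omega⟩).reverse.prod *
        (List.ofFn fun i : Fin m => U ⟨i, by omega⟩).reverse.prod := by
  rw [List.ofFn_congr (two_mul m), List.ofFn_add, List.reverse_append, List.prod_append]
  rfl

variable {α : Type*}

theorem conjTranspose_prod_reverse_ofFn [Fintype α] [DecidableEq α] {k : ℕ}
    (f : Fin k → Matrix α α ℂ) :
    ((List.ofFn f).reverse.prod)ᴴ = (List.ofFn fun i => (f i.rev)ᴴ).reverse.prod := by
  rw [conjTranspose_list_prod, List.map_reverse, List.reverse_reverse, List.map_ofFn,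
    List.reverse_ofFn]
  simp only [Fin.rev_rev]
  rfl

def controlledPair (X Y : Matrix α α ℂ) : Matrix (Fin 2 × α) (Fin 2 × α) ℂ :=
  e00 ⊗ₖ X + e11 ⊗ₖ Y

theorem controlledPair_one [DecidableEq α] : controlledPair (1 : Matrix α α ℂ) 1 = 1 := by
  have h : e00 + e11 = 1 := by
    ext i j
    fin_cases i <;> fin_cases j <;> simp [e00, e11, one_apply]
  rw [controlledPair, ← add_kronecker, h, one_kronecker_one]

theorem controlledPair_mul_controlledPair [Fintype α] (X X' Y Y' : Matrix α α ℂ) :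
    controlledPair X Y * controlledPair X' Y' = controlledPair (X * X') (Y * Y') := by
  have h00 : e00 * e00 = e00 := by simp [e00]
  have h11 : e11 * e11 = e11 := by simp [e11]
  have h01 : e00 * e11 = 0 := by simp [e00, e11]
  have h10 : e11 * e00 = 0 := by simp [e00, e11]
  simp only [controlledPair, add_mul, mul_add, ← mul_kronecker_mul, h00, h11, h01, h10,
    zero_kronecker, add_zero, zero_add]

theorem list_prod_map_controlledPair [Fintype α] [DecidableEq α] {ι : Type*} (l : List ι)
    (X Y : ι → Matrix α α ℂ) :
    (l.map fun i => controlledPair (X i) (Y i)).prod =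
      controlledPair (l.map X).prod (l.map Y).prod := by
  induction l with
  | nil => exact controlledPair_one.symm
  | cons i l ih =>
    simp only [List.map_cons, List.prod_cons, ih, controlledPair_mul_controlledPair]

theorem prod_reverse_ofFn_controlledPair [Fintype α] [DecidableEq α] {k : ℕ}
    (X Y : Fin k → Matrix α α ℂ) :
    (List.ofFn fun i => controlledPair (X i) (Y i)).reverse.prod =
      controlledPair (List.ofFn X).reverse.prod (List.ofFn Y).reverse.prod := by
  simp only [List.ofFn_eq_map, ← List.map_reverse, list_prod_map_controlledPair]

theorem H2_mul_single_mul_H2_apply_zero_zero (j : Fin 2) :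
    (H2 * single j j (1 : ℂ) * H2) 0 0 = 2⁻¹ := by
  have h : (((Real.sqrt 2)⁻¹ : ℝ) : ℂ) * (((Real.sqrt 2)⁻¹ : ℝ) : ℂ) = 2⁻¹ := by
    rw [← Complex.ofReal_mul, ← mul_inv, Real.mul_self_sqrt zero_le_two]
    push_cast
    rfl
  fin_cases j <;>
    simpa [H2, Matrix.mul_apply, Fin.sum_univ_two, vecMul, dotProduct, single_apply] using h

theorem kronecker_mulVec_ket_zero_apply [Fintype α] (K : Matrix (Fin 2) (Fin 2) ℂ)
    (X : Matrix α α ℂ) (ψ : α → ℂ) (i : Fin 2) (x : α) :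
    ((K ⊗ₖ X) *ᵥ fun p => if p.1 = 0 then ψ p.2 else 0) (i, x) = K i 0 * (X *ᵥ ψ) x := by
  simp [mulVec, dotProduct, Fintype.sum_prod_type, Finset.mul_sum, mul_assoc]

theorem hadamard_conj_controlledPair_mulVec_apply_zero [Fintype α] [DecidableEq α]
    (X Y : Matrix α α ℂ) (ψ : α → ℂ) (x : α) :
    (((H2 ⊗ₖ 1) * controlledPair X Y * (H2 ⊗ₖ 1)) *ᵥ
      fun p => if p.1 = 0 then ψ p.2 else 0) (0, x) = 2⁻¹ * ((X + Y) *ᵥ ψ) x := by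
  rw [controlledPair, mul_add, add_mul, ← mul_kronecker_mul, ← mul_kronecker_mul,
    ← mul_kronecker_mul, ← mul_kronecker_mul, one_mul, mul_one, one_mul, mul_one, add_mulVec,
    Pi.add_apply, kronecker_mulVec_ket_zero_apply, kronecker_mulVec_ket_zero_apply, e00, e11,
    H2_mul_single_mul_H2_apply_zero_zero, H2_mul_single_mul_H2_apply_zero_zero, add_mulVec,
    Pi.add_apply, mul_add]

theorem star_dotProduct_self_eq_sum_norm_sq [Fintype α] (w : α → ℂ) :
    star w ⬝ᵥ w = ((∑ x, ‖w x‖ ^ 2 : ℝ) : ℂ) := by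
  simp [dotProduct, Complex.conj_mul']

theorem star_add_mulVec_dotProduct [Fintype α] [DecidableEq α] {X Y : Matrix α α ℂ}
    (hX : Xᴴ * X = 1) (hY : Yᴴ * Y = 1) {ψ : α → ℂ} (hψ : star ψ ⬝ᵥ ψ = 1) :
    star ((X + Y) *ᵥ ψ) ⬝ᵥ ((X + Y) *ᵥ ψ) =
      2 + star ψ ⬝ᵥ (Xᴴ * Y) *ᵥ ψ + star (star ψ ⬝ᵥ (Xᴴ * Y) *ᵥ ψ) := by
  have hstar : star ψ ⬝ᵥ (Xᴴ * Y)ᴴ *ᵥ ψ = star (star ψ ⬝ᵥ (Xᴴ * Y) *ᵥ ψ) := by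
    rw [star_dotProduct, star_mulVec, conjTranspose_conjTranspose, ← dotProduct_mulVec]
  rw [← hstar, star_mulVec, dotProduct_mulVec, vecMul_vecMul, ← dotProduct_mulVec,
    conjTranspose_add, add_mul, mul_add, mul_add, hX, hY, conjTranspose_mul,
    conjTranspose_conjTranspose]
  simp only [add_mulVec, one_mulVec, dotProduct_add, hψ]
  ring

theorem sum_norm_sq_half_add_mulVec [Fintype α] [DecidableEq α] {X Y : Matrix α α ℂ}
    (hX : Xᴴ * X = 1) (hY : Yᴴ * Y = 1) {ψ : α → ℂ} (hψ : star ψ ⬝ᵥ ψ = 1) :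
    ∑ x, ‖2⁻¹ * ((X + Y) *ᵥ ψ) x‖ ^ 2 = (1 + (star ψ ⬝ᵥ (Xᴴ * Y) *ᵥ ψ).re) / 2 := by
  have h := congrArg Complex.re (star_add_mulVec_dotProduct hX hY hψ)
  rw [star_dotProduct_self_eq_sum_norm_sq, Complex.ofReal_re] at h
  simp only [norm_mul, mul_pow, ← Finset.mul_sum, h, Complex.add_re, Complex.star_def,
    Complex.conj_re]
  norm_num
  ring

/-- The alternate Hadamard test: with `U = U_{2m} ⋯ U_1` and
`W_i = |0⟩⟨0| ⊗ U†_{2m+1-i} + |1⟩⟨1| ⊗ U_i`, applying `(H⊗I) W_m ⋯ W_1 (H⊗I)` to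
`|0⟩|ψ⟩` and measuring the first qubit yields outcome `0` with probability
`(1 + Re⟨ψ|U|ψ⟩)/2`. -/
theorem alternate_hadamard_test (n m : ℕ)
    (U : Fin (2 * m) → Matrix (Fin n → ZMod 2) (Fin n → ZMod 2) ℂ)
    (hU : ∀ j, U j ∈ Matrix.unitaryGroup (Fin n → ZMod 2) ℂ)
    (ψ : (Fin n → ZMod 2) → ℂ) (hψ : star ψ ⬝ᵥ ψ = 1) :
    let W : Fin m → Matrix (Fin 2 × (Fin n → ZMod 2)) (Fin 2 × (Fin n → ZMod 2)) ℂ :=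
      fun i => e00 ⊗ₖ (U ⟨2 * m - 1 - i.val, by have := i.isLt; omega⟩)ᴴ +
        e11 ⊗ₖ U ⟨i.val, by have := i.isLt; omega⟩
    let Utot := (List.ofFn U).reverse.prod
    let Hf := H2 ⊗ₖ (1 : Matrix (Fin n → ZMod 2) (Fin n → ZMod 2) ℂ)
    let v : Fin 2 × (Fin n → ZMod 2) → ℂ := fun p => if p.1 = 0 then ψ p.2 else 0
    let φ := (Hf * (List.ofFn W).reverse.prod * Hf) *ᵥ v
    ∑ x : Fin n → ZMod 2, ‖φ (0, x)‖ ^ 2 =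
      (1 + (star ψ ⬝ᵥ Utot *ᵥ ψ).re) / 2 := by
  intro W Utot Hf v φ
  set A := (List.ofFn fun i : Fin m => U ⟨i, by omega⟩).reverse.prod
  set C := (List.ofFn fun i : Fin m => U ⟨m + i, by omega⟩).reverse.prod
  have hW : (List.ofFn W).reverse.prod = controlledPair Cᴴ A := by
    rw [conjTranspose_prod_reverse_ofFn, ← prod_reverse_ofFn_controlledPair]
    congr
    funext i
    simp only [W, controlledPair, Fin.val_rev]
    congr 4
    exact Fin.ext (by dsimp only; omega)
  have hUtot : Utot = C * A := prod_reverse_ofFn_two_mul m U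
  have hA : Aᴴ * A = 1 := mem_unitaryGroup_iff'.mp (list_prod_mem (by simp [hU]))
  have hC : Cᴴᴴ * Cᴴ = 1 := by
    rw [conjTranspose_conjTranspose]
    exact mem_unitaryGroup_iff.mp (list_prod_mem (by simp [hU]))
  have hφ : ∀ x, φ (0, x) = 2⁻¹ * ((Cᴴ + A) *ᵥ ψ) x := fun x => by
    simp only [φ, hW]
    exact hadamard_conj_controlledPair_mulVec_apply_zero _ _ _ _
  simp only [hφ, sum_norm_sq_half_add_mulVec hC hA hψ, conjTranspose_conjTranspose, hUtot]
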